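/- arXiv:1509.09168 — 2 statements merged into one kernel-verified Lean document; each statement's English description precedes it below -/
import Mathlib

section
/- Let r ≥ 2 and let G be a graph such that every set of r+1 vertices of G has a common neighbor. Then for every r-edge-coloring of G, the vertex set of G can be covered by at most r² monochromatic connected subgraphs, i.e., tc_r(G) ≤ r². -/
open SimpleGraph

/-- The subgraph of `G` consisting of edges of color `i` under edge-coloring `c`. -/
def monoSub {V : Type*} (G : SimpleGraph V) {r : ℕ} (c : Sym2 V → Fin r) (i : Fin r) :
    SimpleGraph V where
  Adj u v := G.Adj u v ∧ c s(u, v) = i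
  symm := ⟨fun u v h => ⟨h.1.symm, by rw [Sym2.eq_swap]; exact h.2⟩⟩
  loopless := ⟨fun u h => G.irrefl h.1⟩

/-- `V(G)` can be covered by at most `s` monochromatic connected subgraphs. -/
def HasMonoCover {V : Type*} (G : SimpleGraph V) {r : ℕ} (c : Sym2 V → Fin r) (s : ℕ) : Prop :=
  ∃ t : ℕ, t ≤ s ∧ ∃ (f : Fin t → Set V) (col : Fin t → Fin r),
    (∀ j, ((monoSub G c (col j)).induce (f j)).Connected) ∧ (⋃ j, f j) = Set.univ

/-- `V(G)` can be partitioned into at most `s` monochromatic connected subgraphs. -/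
def HasMonoPartition {V : Type*} (G : SimpleGraph V) {r : ℕ} (c : Sym2 V → Fin r) (s : ℕ) : Prop :=
  ∃ t : ℕ, t ≤ s ∧ ∃ (f : Fin t → Set V) (col : Fin t → Fin r),
    (∀ j, ((monoSub G c (col j)).induce (f j)).Connected) ∧ (⋃ j, f j) = Set.univ ∧
    ∀ j j', j ≠ j' → Disjoint (f j) (f j')

/-- The independence number of `G`. -/
noncomputable def indepNum' {V : Type*} (G : SimpleGraph V) : ℕ :=
  sSup {k | ∃ s : Finset V, s.card = k ∧ ∀ u ∈ s, ∀ v ∈ s, u ≠ v → ¬ G.Adj u v}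

/-!
Call a set of vertices *separated* if no two of its vertices lie in a common monochromatic
component. If `w` is a common neighbour of `r + 1` vertices, two of the edges from `w` to them
share a color by pigeonhole, so a separated set has at most `r` vertices. A separated set of
maximum size meets, in some color, the monochromatic component of every vertex; hence the
`r` monochromatic components of each of its at most `r` vertices cover `V(G)`.
-/

namespace MonoCover

variable {V : Type*} {G : SimpleGraph V} {r : ℕ} {c : Sym2 V → Fin r}

lemma hasMonoCover_of_fintype {ι : Type*} [Fintype ι] (f : ι → Set V) (col : ι → Fin r)
    (hconn : ∀ j, ((monoSub G c (col j)).induce (f j)).Connected) (hcover : ⋃ j, f j = Set.univ)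
    {s : ℕ} (hcard : Fintype.card ι ≤ s) : HasMonoCover G c s := by
  let e := (Fintype.equivFin ι).symm
  refine ⟨Fintype.card ι, hcard, f ∘ e, col ∘ e, fun j => hconn (e j), ?_⟩
  rw [← hcover]
  exact e.surjective.iUnion_comp f

lemma monoSub_reachable_of_adj_of_adj {w u v : V} (hu : G.Adj w u) (hv : G.Adj w v)
    (hcol : c s(w, u) = c s(w, v)) : (monoSub G c (c s(w, u))).Reachable u v :=
  (show (monoSub G c _).Adj w u from ⟨hu, rfl⟩).symm.reachable.trans
    (show (monoSub G c _).Adj w v from ⟨hv, hcol.symm⟩).reachable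

variable (G c) in
def Separated (S : Finset V) : Prop :=
  (S : Set V).Pairwise fun u v => ∀ i, ¬ (monoSub G c i).Reachable u v

lemma Separated.card_le
    (hcn : ∀ S : Finset V, S.card = r + 1 → ∃ w, ∀ v ∈ S, G.Adj w v)
    {S : Finset V} (hS : Separated G c S) : S.card ≤ r := by
  by_contra! hlt
  obtain ⟨T, hTS, hT⟩ := S.exists_subset_card_eq hlt
  obtain ⟨w, hw⟩ := hcn T hT
  obtain ⟨u, hu, v, hv, huv, hcol⟩ :=
    Finset.exists_ne_map_eq_of_card_lt_of_maps_to (s := T) (t := Finset.univ) (f := fun v => c s(w, v))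
      (by simp [hT]) (fun _ _ => Finset.mem_coe.2 (Finset.mem_univ _))
  exact hS (hTS hu) (hTS hv) huv _ (monoSub_reachable_of_adj_of_adj (hw u hu) (hw v hv) hcol)

lemma Separated.insert [DecidableEq V] {S : Finset V} (hS : Separated G c S) {v : V}
    (hv : ∀ u ∈ S, ∀ i, ¬ (monoSub G c i).Reachable u v) : Separated G c (insert v S) := by
  rw [Separated, Finset.coe_insert]
  exact Set.Pairwise.insert hS fun u hu _ => ⟨fun i h => hv u hu i h.symm, hv u hu⟩

lemma Separated.exists_reachable_of_maximal {S : Finset V} (hS : Separated G c S)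
    (hmax : ∀ T, Separated G c T → T.card ≤ S.card) (v : V) :
    ∃ u ∈ S, ∃ i, (monoSub G c i).Reachable u v := by
  classical
  by_contra! hv
  -- `c s(v, v)` only serves to exhibit some color, as `Fin r` could a priori be empty.
  have hvS : v ∉ S := fun hvS => hv v hvS (c s(v, v)) (Reachable.refl v)
  have := hmax _ (hS.insert hv)
  rw [Finset.card_insert_of_notMem hvS] at this
  omega

lemma exists_maximal_separated {m : ℕ} (hbound : ∀ S, Separated G c S → S.card ≤ m) :
    ∃ S, Separated G c S ∧ ∀ T, Separated G c T → T.card ≤ S.card := by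
  let K := {k | ∃ S, Separated G c S ∧ S.card = k}
  have hK : sSup K ∈ K :=
    Nat.sSup_mem ⟨0, ∅, by simp [Separated]⟩ ⟨m, by rintro _ ⟨S, hS, rfl⟩; exact hbound S hS⟩
  obtain ⟨S, hS, hcard⟩ := hK
  refine ⟨S, hS, fun T hT => hcard ▸ le_csSup ⟨m, ?_⟩ ⟨T, hT, rfl⟩⟩
  rintro _ ⟨S', hS', rfl⟩
  exact hbound S' hS'

theorem hasMonoCover_of_separated_card_le {m : ℕ}
    (hbound : ∀ S, Separated G c S → S.card ≤ m) : HasMonoCover G c (m * r) := by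
  obtain ⟨S, hS, hmax⟩ := exists_maximal_separated hbound
  refine hasMonoCover_of_fintype (ι := S × Fin r)
    (fun p => ((monoSub G c p.2).connectedComponentMk p.1).supp) Prod.snd
    (fun p => (ConnectedComponent.maximal_connected_induce_supp _).prop) ?_ ?_
  · refine Set.eq_univ_of_forall fun v => ?_
    obtain ⟨u, hu, i, hui⟩ := hS.exists_reachable_of_maximal hmax v
    exact Set.mem_iUnion.2 ⟨(⟨u, hu⟩, i), ConnectedComponent.sound hui.symm⟩
  · simpa using Nat.mul_le_mul_right r (hbound S hS)

end MonoCover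

open MonoCover in
theorem stmt3_general {V : Type*} (r : ℕ) (G : SimpleGraph V)
    (hcn : ∀ S : Finset V, S.card = r + 1 → ∃ w, ∀ v ∈ S, G.Adj w v)
    (c : Sym2 V → Fin r) :
    HasMonoCover G c (r ^ 2) := by
  rw [sq]
  exact hasMonoCover_of_separated_card_le fun _ hS => hS.card_le hcn

/-- If every r+1 vertices of G have a common neighbor, then tc_r(G) ≤ r². -/
theorem stmt3 {V : Type*} [Fintype V] (r : ℕ) (hr : 2 ≤ r) (G : SimpleGraph V)
    (hcn : ∀ S : Finset V, S.card = r + 1 → ∃ w, ∀ v ∈ S, G.Adj w v)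
    (c : Sym2 V → Fin r) :
    HasMonoCover G c (r ^ 2) :=
  stmt3_general r G hcn c
end

section
/- Let r ≥ 1 and n ≥ 2r+2. There exists a graph G on n vertices with minimum degree δ(G) = ⌈(r(n−r−1)+1)/(r+1)⌉ − 1 and an r-edge-coloring of G such that V(G) cannot be covered by the vertex sets of r or fewer monochromatic connected subgraphs (i.e., tc_r(G) > r). -/
/-!
Take an independent set `{v_0, …, v_r}` and parts `V_0, …, V_r`; join `v_j` to every part but
`V_j`, and join any two part vertices unless one lies in `V_0` and the other in `V_r`. Colour
`v_j V_s` with `j - 1` if `s < j` and with `j` if `s > j`, `V_0 V_t` with `t`, and `V_s V_t` with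
`0` for `s, t ≥ 1`. In every colour the vertices `v_0, …, v_r` then lie in pairwise different
components (see `Role.label`), so no `r` monochromatic connected subgraphs cover them.
For the target degree `D` take `|V_0| = n - r - 1 - D` and let `V_1, …, V_r` have sizes at most
`⌈D / r⌉` summing to `D`: `v_0` has degree exactly `D`, and `⌈D / r⌉ ≤ |V_0|` makes every other
degree at least `D`.
-/

open SimpleGraph

section Separation

variable {V α : Type*}

theorem SimpleGraph.Reachable.eq_of_forall_adj {H : SimpleGraph V} {f : V → α}
    (hf : ∀ x y, H.Adj x y → f x = f y) {x y : V} (h : H.Reachable x y) : f x = f y := by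
  obtain ⟨p⟩ := h
  induction p with
  | nil => rfl
  | cons hadj _ ih => exact (hf _ _ hadj).trans ih

theorem not_hasMonoCover_of_injective_labels {G : SimpleGraph V} {r s : ℕ} {c : Sym2 V → Fin r}
    (L : Fin r → V → α) (hL : ∀ k x y, (monoSub G c k).Adj x y → L k x = L k y)
    (v : Fin (s + 1) → V) (hv : ∀ k, Function.Injective (L k ∘ v)) :
    ¬ HasMonoCover G c s := by
  rintro ⟨t, hts, f, col, hconn, hcover⟩
  have hmem : ∀ i, ∃ j, v i ∈ f j := fun i => Set.mem_iUnion.mp (hcover ▸ Set.mem_univ _)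
  choose J hJ using hmem
  obtain ⟨i, i', hne, hJi⟩ := Fintype.exists_ne_map_eq_of_card_lt J (by simp; omega)
  have hreach : (monoSub G c (col (J i))).Reachable (v i) (v i') :=
    ((hconn _).preconnected ⟨_, hJ i⟩ ⟨_, hJi ▸ hJ i'⟩).map (Embedding.induce _).toHom
  exact hne (hv _ (hreach.eq_of_forall_adj (hL _)))

end Separation

open Finset

theorem Fin.ncard_setOf_val {n : ℕ} (P : ℕ → Prop) [DecidablePred P] :
    {w : Fin n | P w}.ncard = ((range n).filter P).card := by
  have hpre : {w : Fin n | P w} = Fin.val ⁻¹' ↑((range n).filter P) := by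
    ext w; simp
  rw [hpre, Set.ncard_preimage_of_injective_subset_range Fin.val_injective, Set.ncard_coe_finset]
  intro y hy
  exact ⟨⟨y, (mem_range.mp (mem_filter.mp hy).1)⟩, rfl⟩

theorem Finset.card_range_filter_mod_eq_le (r j L : ℕ) :
    ((range L).filter fun z => z % r = j).card ≤ (L - 1) / r + 1 := by
  calc ((range L).filter fun z => z % r = j).card
      ≤ ((range ((L - 1) / r + 1)).image fun i => j + r * i).card := by
        refine card_le_card fun z hz => ?_
        obtain ⟨hzL, hzj⟩ := mem_filter.mp hz
        refine mem_image.mpr ⟨z / r, ?_, ?_⟩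
        · exact mem_range.mpr (Nat.lt_succ_of_le (Nat.div_le_div_right (by simp at hzL; omega)))
        · rw [← hzj, Nat.mod_add_div]
    _ ≤ (L - 1) / r + 1 := card_image_le.trans (card_range _).le

namespace TreeCoverExample

inductive Role
  | special (j : ℕ)
  | part (s : ℕ)
  deriving DecidableEq

namespace Role

variable (r : ℕ)

def Adj : Role → Role → Prop
  | special _, special _ => False
  | special j, part s => s ≠ j
  | part s, special j => s ≠ j
  | part s, part t => ¬(s = 0 ∧ t = r) ∧ ¬(s = r ∧ t = 0)

instance : DecidableRel (Adj r) := fun a b => by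
  cases a <;> cases b <;> unfold Adj <;> infer_instance

def Valid : Role → Prop
  | special j => j ≤ r
  | part s => s ≤ r

variable {r}

theorem Adj.symm {a b : Role} (h : a.Adj r b) : b.Adj r a := by
  cases a <;> cases b <;> simp only [Adj] at h ⊢ <;> tauto

def color : Role → Role → ℕ
  | special _, special _ => 0
  | special j, part s => if s < j then j - 1 else j
  | part s, special j => if s < j then j - 1 else j
  | part s, part t => if s = 0 then t else if t = 0 then s else 0

theorem color_comm (a b : Role) : color a b = color b a := by
  cases a <;> cases b <;> simp only [color]; all_goals split_ifs <;> omega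

theorem color_lt (hr : 0 < r) {a b : Role} (ha : a.Valid r) (hb : b.Valid r) (h : a.Adj r b) :
    color a b < r := by
  cases a <;> cases b <;> simp only [Valid, Adj, color] at * <;> split_ifs <;> omega

/-- In colour `k`, label `0` marks `{v_{k+1}} ∪ V_0 ∪ ⋯ ∪ V_k`, label `1` marks
`{v_k} ∪ V_{k+1} ∪ ⋯ ∪ V_r`, and every other `v_j` gets a label of its own. -/
def label (k : ℕ) : Role → ℕ
  | special j => if j = k + 1 then 0 else if j = k then 1 else j + 2
  | part s => if s ≤ k then 0 else 1

theorem label_color_eq {a b : Role} (h : a.Adj r b) :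
    label (color a b) a = label (color a b) b := by
  cases a <;> cases b <;> simp only [Adj, color, label] at * <;> split_ifs <;> omega

theorem label_special_injective (k : ℕ) : Function.Injective fun j => label k (special j) := by
  intro i j h
  simp only [label] at h
  split_ifs at h <;> omega

end Role

section Blowup

variable {V : Type*} (r : ℕ) (π : V → Role)

def blowup : SimpleGraph V where
  Adj x y := x ≠ y ∧ (π x).Adj r (π y)
  symm := ⟨fun _ _ h => ⟨h.1.symm, h.2.symm⟩⟩
  loopless := ⟨fun _ h => h.1 rfl⟩

/-- Reducing modulo `r` only changes the colour of non-edges, by `Role.color_lt`. -/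
def blowupColoring (hr : 0 < r) : Sym2 V → Fin r :=
  Sym2.lift ⟨fun x y => ⟨Role.color (π x) (π y) % r, Nat.mod_lt _ hr⟩,
    fun x y => by simp only [Role.color_comm]⟩

theorem not_hasMonoCover_blowup (hr : 0 < r) (hπ : ∀ x, (π x).Valid r)
    (v : Fin (r + 1) → V) (hv : ∀ i, π (v i) = .special i) :
    ¬ HasMonoCover (blowup r π) (blowupColoring r π hr) r := by
  refine not_hasMonoCover_of_injective_labels (fun k x => Role.label k (π x)) ?_ v ?_
  · rintro k x y ⟨hadj, hk⟩
    have hcol : Role.color (π x) (π y) = k := by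
      rw [← Nat.mod_eq_of_lt (Role.color_lt hr (hπ x) (hπ y) hadj.2)]
      exact congrArg Fin.val hk
    simpa only [← hcol] using Role.label_color_eq hadj.2
  · intro k i j hij
    simp only [Function.comp_apply, hv] at hij
    exact Fin.ext (Role.label_special_injective k hij)

end Blowup

variable (r n : ℕ)

def minDeg : ℕ := (r * (n - r - 1) + 1 + (r + 1) - 1) / (r + 1) - 1

/-- Spreading `0, …, D - 1` cyclically over `V_1, …, V_r` keeps each of these parts of size
at most `⌈D / r⌉`. -/
def role (x : ℕ) : Role :=
  if x < minDeg r n then .part (x % r + 1)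
  else if x ≤ minDeg r n + r then .special (x - minDeg r n)
  else .part 0

def graph : SimpleGraph (Fin n) := blowup r (role r n ∘ Fin.val)

def coloring (hr : 0 < r) : Sym2 (Fin n) → Fin r := blowupColoring r (role r n ∘ Fin.val) hr

def partSet (t : ℕ) : Finset ℕ := (range n).filter fun y => role r n y = .part t

def nbrs (x : ℕ) : Finset ℕ := (range n).filter fun y => x ≠ y ∧ (role r n x).Adj r (role r n y)

variable {r n}

theorem role_valid (hr : 0 < r) (x : ℕ) : (role r n x).Valid r := by
  have := Nat.mod_lt x hr
  unfold role; split_ifs <;> simp only [Role.Valid] <;> omega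

theorem role_eq_special_iff {x j : ℕ} :
    role r n x = .special j ↔ x = minDeg r n + j ∧ j ≤ r := by
  unfold role; split_ifs <;> simp <;> omega

theorem role_eq_part_iff {x t : ℕ} :
    role r n x = .part t ↔ (x < minDeg r n ∧ x % r + 1 = t) ∨ (minDeg r n + r < x ∧ t = 0) := by
  unfold role; split_ifs <;> simp <;> omega

theorem not_hasMonoCover_graph (hr : 0 < r) (hn : r + 1 + minDeg r n ≤ n) :
    ¬ HasMonoCover (graph r n) (coloring r n hr) r :=
  not_hasMonoCover_blowup r _ hr (fun x => role_valid hr x)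
    (fun i => ⟨minDeg r n + i, by omega⟩) (fun i => role_eq_special_iff.mpr ⟨rfl, by omega⟩)

theorem succ_mul_minDeg_le : (r + 1) * minDeg r n ≤ r * (n - r - 1) := by
  set N := r * (n - r - 1) + 1 + (r + 1) - 1
  have hN : N = r * (n - r - 1) + (r + 1) := by omega
  have hq : N / (r + 1) * (r + 1) ≤ N := Nat.div_mul_le_self N (r + 1)
  have hq1 : 1 ≤ N / (r + 1) := (Nat.le_div_iff_mul_le (by omega)).mpr (by omega)
  obtain ⟨d, hd⟩ : ∃ d, N / (r + 1) = d + 1 := ⟨N / (r + 1) - 1, by omega⟩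
  change (r + 1) * (N / (r + 1) - 1) ≤ _
  rw [hd, Nat.add_sub_cancel]
  rw [hd, hN] at hq
  nlinarith

theorem minDeg_le_sub : minDeg r n ≤ n - r - 1 := by
  have := succ_mul_minDeg_le (r := r) (n := n)
  nlinarith

theorem minDeg_sub_one_div_succ_le (hr : 0 < r) (hn : 2 * r + 2 ≤ n) :
    (minDeg r n - 1) / r + 1 ≤ n - minDeg r n - (r + 1) := by
  have hD := succ_mul_minDeg_le (r := r) (n := n)
  set D := minDeg r n
  set w := n - r - 1
  have hDw : D ≤ w := minDeg_le_sub
  obtain ⟨e, he⟩ : ∃ e, w = D + e := ⟨w - D, by omega⟩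
  have hDe : D ≤ e * r := by rw [he] at hD; nlinarith
  have hDe' : D - 1 < e * r := by
    rcases Nat.eq_zero_or_pos D with hD0 | hD0
    · have hw : 0 < w * r := Nat.mul_pos (by omega) hr
      rw [he, hD0, zero_add] at hw; omega
    · omega
  have hlt : (D - 1) / r < e := (Nat.div_lt_iff_lt_mul hr).mpr hDe'
  omega

theorem card_partSet_le (hr : 0 < r) (hn : 2 * r + 2 ≤ n) (t : ℕ) :
    (partSet r n t).card ≤ n - minDeg r n - (r + 1) := by
  rcases Nat.eq_zero_or_pos t with rfl | ht
  · calc (partSet r n 0).card ≤ (Ioo (minDeg r n + r) n).card := card_le_card fun y hy => by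
          simp only [partSet, mem_filter, mem_range, role_eq_part_iff] at hy
          simp only [mem_Ioo]; omega
      _ = n - minDeg r n - (r + 1) := by simp only [Nat.card_Ioo]; omega
  · calc (partSet r n t).card ≤ ((range (minDeg r n)).filter fun z => z % r = t - 1).card :=
          card_le_card fun y hy => by
            simp only [partSet, mem_filter, mem_range, role_eq_part_iff] at hy ⊢; omega
      _ ≤ (minDeg r n - 1) / r + 1 := card_range_filter_mod_eq_le r (t - 1) _
      _ ≤ n - minDeg r n - (r + 1) := minDeg_sub_one_div_succ_le hr hn

theorem exists_nonadj_subset_union_partSet (hr : 0 < r) (x : ℕ) :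
    ∃ (S : Finset ℕ) (t : ℕ), S.card ≤ r + 1 ∧
      (range n).filter (fun y => ¬ (x ≠ y ∧ (role r n x).Adj r (role r n y))) ⊆
        S ∪ partSet r n t := by
  rcases hx : role r n x with j | s
  · refine ⟨Ico (minDeg r n) (minDeg r n + r + 1), j, by rw [Nat.card_Ico]; omega,
      fun y hy => ?_⟩
    simp only [mem_filter, mem_range, not_and_or, not_not] at hy
    simp only [mem_union, mem_Ico, partSet, mem_filter, mem_range]
    rcases hy' : role r n y with j' | t
    · have := role_eq_special_iff.mp hy'; left; omega
    · rw [hy'] at hy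
      rcases hy.2 with rfl | hadj
      · simp [hx] at hy'
      · simp only [Role.Adj, not_not] at hadj; right; exact ⟨hy.1, hadj ▸ rfl⟩
  · refine ⟨{x, minDeg r n + s}, r - s, card_le_two.trans (by omega), fun y hy => ?_⟩
    simp only [mem_filter, mem_range, not_and_or, not_not] at hy
    simp only [mem_union, mem_insert, mem_singleton, partSet, mem_filter, mem_range]
    rcases hy.2 with rfl | hadj
    · simp
    rcases hy' : role r n y with j' | t
    · rw [hy'] at hadj; simp only [Role.Adj, not_not] at hadj
      have := role_eq_special_iff.mp hy'; left; right; omega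
    · rw [hy'] at hadj; simp only [Role.Adj] at hadj
      right; exact ⟨hy.1, by congr 1; omega⟩

theorem minDeg_le_card_nbrs (hr : 0 < r) (hn : 2 * r + 2 ≤ n) (x : ℕ) :
    minDeg r n ≤ (nbrs r n x).card := by
  obtain ⟨S, t, hS, hsub⟩ := exists_nonadj_subset_union_partSet (n := n) hr x
  have hsplit := card_filter_add_card_filter_not (s := range n)
    (p := fun y => x ≠ y ∧ (role r n x).Adj r (role r n y))
  have hnonadj := (card_le_card hsub).trans (card_union_le _ _)
  have hpart := card_partSet_le hr hn t
  have hD := minDeg_le_sub (r := r) (n := n)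
  rw [card_range] at hsplit
  unfold nbrs
  omega

theorem card_nbrs_minDeg_le : (nbrs r n (minDeg r n)).card ≤ minDeg r n := by
  have hv₀ : role r n (minDeg r n) = .special 0 := role_eq_special_iff.mpr ⟨rfl, Nat.zero_le r⟩
  calc (nbrs r n (minDeg r n)).card ≤ (range (minDeg r n)).card := card_le_card fun y hy => by
        simp only [nbrs, mem_filter, hv₀] at hy
        rcases hy' : role r n y with j | t
        · simp [hy', Role.Adj] at hy
        · simp only [hy', Role.Adj] at hy
          have := role_eq_part_iff.mp hy'
          exact mem_range.mpr (by omega)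
    _ = minDeg r n := card_range _

theorem ncard_setOf_graph_adj (v : Fin n) :
    {w | (graph r n).Adj v w}.ncard = (nbrs r n v).card := by
  rw [nbrs, ← Fin.ncard_setOf_val]
  congr
  ext w
  simp [graph, blowup, Fin.val_ne_iff]

end TreeCoverExample

open TreeCoverExample in
/-- Example: for n ≥ 2r+2 there is a graph on n vertices with minimum degree exactly
⌈(r(n−r−1)+1)/(r+1)⌉ − 1 and an r-coloring with no cover by r monochromatic connected
subgraphs, i.e. tc_r(G) > r.  Here the ceiling ⌈a/b⌉ is written (a + b - 1)/b in ℕ. -/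
theorem stmt14 (r n : ℕ) (hr : 1 ≤ r) (hn : 2 * r + 2 ≤ n) :
    ∃ G : SimpleGraph (Fin n),
      (∀ v : Fin n, (r * (n - r - 1) + 1 + (r + 1) - 1) / (r + 1) - 1 ≤ {w | G.Adj v w}.ncard) ∧
      (∃ v : Fin n, {w | G.Adj v w}.ncard = (r * (n - r - 1) + 1 + (r + 1) - 1) / (r + 1) - 1) ∧
      ∃ c : Sym2 (Fin n) → Fin r, ¬ HasMonoCover G c r := by
  have hD : minDeg r n ≤ n - r - 1 := minDeg_le_sub
  refine ⟨graph r n, fun v => ?_, ⟨⟨minDeg r n, by omega⟩, ?_⟩, coloring r n hr,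
    not_hasMonoCover_graph hr (by omega)⟩
  · rw [ncard_setOf_graph_adj]
    exact minDeg_le_card_nbrs hr hn v
  · rw [ncard_setOf_graph_adj]
    exact le_antisymm card_nbrs_minDeg_le (minDeg_le_card_nbrs hr hn _)
end
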